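/- arXiv:2210.15729 — 3 statements merged into one kernel-verified Lean document; each statement's English description precedes it below -/
import Mathlib

section
/- Let k ∈ ℕ with k ≥ 2, and let ū : (0,∞) → ℝ be smooth, belonging to H^k((0,∞)) with ∂_r^i ū(0) = 0 for all i < k − 1 and ∫₀^∞ (|∂_r^k ū|² + r^(−2)|∂_r^(k−1) ū|²) r dr < ∞. Then ∫₀^∞ r^(−2k) |ū(r)|² r dr ≤ c ∫₀^∞ r^(−2)|∂_r^(k−1) ū(r)|² r dr for a constant c depending only on k, and consequently Σ_{i=0}^k ∫₀^∞ |∂_r^i ū|² r^(2(i−k)) r dr ≤ c' ∫₀^∞ (|∂_r^k ū|² + r^(−2) |∂_r^(k−1) ū|²) r dr. -/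
/-!
If `∂^i u (0) = 0`, then `∂^i u` is the primitive of `∂^(i+1) u`, and Hardy's inequality
`∫₀^∞ F² x^(-a) dx ≤ (2 / (a - 1))² ∫₀^∞ f² x^(2-a) dx` for `F x = ∫₀^x f` and `a > 1` bounds
the weighted norm `∫ |∂^i u|² r^(2(i-k)) r dr` by the next one. For `i ≤ k - 2` the exponent is
`a = 2(k - i) - 1 ≥ 3`, so the constant is at most `1`: these weighted norms increase with `i`
up to `i = k - 1`, which gives both estimates with `c = 1` and `c' = k + 1`.

Hardy's inequality itself is Cauchy–Schwarz on `(0, x)` with the weight `t^((3-a)/2)`, followed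
by Tonelli.
-/

open MeasureTheory Set
open scoped ENNReal

theorem ENNReal.lintegral_mul_sq_le {α : Type*} [MeasurableSpace α] (μ : Measure α)
    {f g : α → ℝ≥0∞} (hf : AEMeasurable f μ) (hg : AEMeasurable g μ) :
    (∫⁻ a, f a * g a ∂μ) ^ 2 ≤ (∫⁻ a, f a ^ 2 ∂μ) * ∫⁻ a, g a ^ 2 ∂μ := by
  have h := ENNReal.lintegral_mul_le_Lp_mul_Lq μ Real.HolderConjugate.two_two hf hg
  simp only [Pi.mul_apply, ENNReal.rpow_two] at h
  calc (∫⁻ a, f a * g a ∂μ) ^ 2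
      ≤ ((∫⁻ a, f a ^ 2 ∂μ) ^ (1 / 2 : ℝ) * (∫⁻ a, g a ^ 2 ∂μ) ^ (1 / 2 : ℝ)) ^ 2 := by
        gcongr
    _ = (∫⁻ a, f a ^ 2 ∂μ) * ∫⁻ a, g a ^ 2 ∂μ := by
        rw [mul_pow, ← ENNReal.rpow_natCast, ← ENNReal.rpow_natCast, ← ENNReal.rpow_mul,
          ← ENNReal.rpow_mul]
        norm_num

theorem ofReal_sq_integral_le_lintegral_mul_lintegral_inv {α : Type*} [MeasurableSpace α]
    {μ : Measure α} {f w : α → ℝ} (hf : AEMeasurable f μ) (hw : AEMeasurable w μ)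
    (hw_pos : ∀ᵐ a ∂μ, 0 < w a) :
    ENNReal.ofReal ((∫ a, f a ∂μ) ^ 2) ≤
      (∫⁻ a, ENNReal.ofReal (f a ^ 2 * w a) ∂μ) * ∫⁻ a, ENNReal.ofReal (w a)⁻¹ ∂μ := by
  have hsplit : (fun a => ‖f a‖ₑ) =ᵐ[μ]
      fun a => ENNReal.ofReal (|f a| * √(w a)) * ENNReal.ofReal (√(w a))⁻¹ := by
    filter_upwards [hw_pos] with a ha
    rw [← ENNReal.ofReal_mul (by positivity), mul_assoc,
      mul_inv_cancel₀ (Real.sqrt_pos.2 ha).ne', mul_one, Real.enorm_eq_ofReal_abs]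
  have hsq : ∀ x : ℝ, 0 ≤ x → ENNReal.ofReal x ^ 2 = ENNReal.ofReal (x ^ 2) := fun x hx =>
    (ENNReal.ofReal_pow hx 2).symm
  calc ENNReal.ofReal ((∫ a, f a ∂μ) ^ 2) = ‖∫ a, f a ∂μ‖ₑ ^ 2 := by
        rw [Real.enorm_eq_ofReal_abs, ← ENNReal.ofReal_pow (abs_nonneg _), sq_abs]
    _ ≤ (∫⁻ a, ‖f a‖ₑ ∂μ) ^ 2 := by gcongr; exact enorm_integral_le_lintegral_enorm _
    _ ≤ (∫⁻ a, ENNReal.ofReal (|f a| * √(w a)) ^ 2 ∂μ) *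
          ∫⁻ a, ENNReal.ofReal (√(w a))⁻¹ ^ 2 ∂μ := by
        rw [lintegral_congr_ae hsplit]
        exact ENNReal.lintegral_mul_sq_le μ (by fun_prop) (by fun_prop)
    _ = (∫⁻ a, ENNReal.ofReal (f a ^ 2 * w a) ∂μ) * ∫⁻ a, ENNReal.ofReal (w a)⁻¹ ∂μ := by
        congr 1 <;> refine lintegral_congr_ae ?_ <;> filter_upwards [hw_pos] with a ha
        · rw [hsq _ (by positivity), mul_pow, sq_abs, Real.sq_sqrt ha.le]
        · rw [hsq _ (by positivity), inv_pow, Real.sq_sqrt ha.le]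

theorem lintegral_Ioi_mul_setLIntegral_Ioc {μ : Measure ℝ} [SFinite μ] {g w : ℝ → ℝ≥0∞}
    (hg : Measurable g) (hw : Measurable w) (a : ℝ) :
    ∫⁻ x in Ioi a, (∫⁻ t in Ioc a x, g t ∂μ) * w x ∂μ =
      ∫⁻ t in Ioi a, g t * ∫⁻ x in Ici t, w x ∂μ ∂μ := by
  set H : ℝ → ℝ → ℝ≥0∞ := fun x t => (Iic x).indicator (fun t => g t * w x) t
  have hH : Measurable (Function.uncurry H) := by
    refine Measurable.ite ?_ ((hg.comp measurable_snd).mul (hw.comp measurable_fst))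
      measurable_const
    exact measurableSet_le measurable_snd measurable_fst
  calc ∫⁻ x in Ioi a, (∫⁻ t in Ioc a x, g t ∂μ) * w x ∂μ
      = ∫⁻ x in Ioi a, ∫⁻ t in Ioi a, H x t ∂μ ∂μ := by
        refine lintegral_congr fun x => ?_
        rw [← lintegral_mul_const _ hg, lintegral_indicator measurableSet_Iic,
          Measure.restrict_restrict measurableSet_Iic, inter_comm, Ioi_inter_Iic]
    _ = ∫⁻ t in Ioi a, ∫⁻ x in Ioi a, H x t ∂μ ∂μ := lintegral_lintegral_swap hH.aemeasurable
    _ = ∫⁻ t in Ioi a, g t * ∫⁻ x in Ici t, w x ∂μ ∂μ := by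
        refine setLIntegral_congr_fun measurableSet_Ioi fun t ht => ?_
        have hH' : ∀ x, H x t = (Ici t).indicator (fun x => g t * w x) x := fun x => by
          simp [H, indicator_apply]
        simp_rw [hH']
        rw [lintegral_indicator measurableSet_Ici, Measure.restrict_restrict measurableSet_Ici,
          inter_eq_left.2 (Ici_subset_Ioi.2 ht), lintegral_const_mul _ hw]

theorem lintegral_Ioc_zero_rpow {p : ℝ} (hp : -1 < p) {x : ℝ} (hx : 0 ≤ x) :
    ∫⁻ t in Ioc 0 x, ENNReal.ofReal (t ^ p) = ENNReal.ofReal (x ^ (p + 1) / (p + 1)) := by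
  have hint : IntegrableOn (fun t : ℝ => t ^ p) (Ioc 0 x) :=
    (intervalIntegrable_iff_integrableOn_Ioc_of_le hx).1
      (intervalIntegral.intervalIntegrable_rpow' hp)
  rw [← ofReal_integral_eq_lintegral_ofReal hint, ← intervalIntegral.integral_of_le hx,
    integral_rpow (Or.inl hp), Real.zero_rpow (by linarith), sub_zero]
  filter_upwards [ae_restrict_mem measurableSet_Ioc] with t ht
  exact Real.rpow_nonneg ht.1.le _

theorem lintegral_Ici_rpow {p : ℝ} (hp : p < -1) {t : ℝ} (ht : 0 < t) :
    ∫⁻ x in Ici t, ENNReal.ofReal (x ^ p) = ENNReal.ofReal (-t ^ (p + 1) / (p + 1)) := by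
  rw [← Measure.restrict_congr_set Ioi_ae_eq_Ici,
    ← ofReal_integral_eq_lintegral_ofReal (integrableOn_Ioi_rpow_of_lt hp ht),
    integral_Ioi_rpow_of_lt hp ht]
  filter_upwards [ae_restrict_mem measurableSet_Ioi] with x hx
  exact Real.rpow_nonneg (ht.trans hx).le _

theorem hardy_inequality {f : ℝ → ℝ} (hf : Measurable f) {a : ℝ} (ha : 1 < a) :
    ∫⁻ x in Ioi 0, ENNReal.ofReal ((∫ t in 0..x, f t) ^ 2 * x ^ (-a)) ≤
      ENNReal.ofReal (4 / (a - 1) ^ 2) *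
        ∫⁻ x in Ioi 0, ENNReal.ofReal (f x ^ 2 * x ^ (2 - a)) := by
  obtain ⟨b, rfl⟩ : ∃ b, a = 2 * b + 1 := ⟨(a - 1) / 2, by ring⟩
  have hb : 0 < b := by linarith
  set g : ℝ → ℝ≥0∞ := fun t => ENNReal.ofReal (f t ^ 2 * t ^ (1 - b))
  set w : ℝ → ℝ≥0∞ := fun x => ENNReal.ofReal (b⁻¹ * x ^ (-b - 1))
  have hpointwise : ∀ x ∈ Ioi (0 : ℝ),
      ENNReal.ofReal ((∫ t in 0..x, f t) ^ 2 * x ^ (-(2 * b + 1))) ≤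
        (∫⁻ t in Ioc 0 x, g t) * w x := by
    intro x (hx : 0 < x)
    have hCS := ofReal_sq_integral_le_lintegral_mul_lintegral_inv
      (μ := volume.restrict (Ioc 0 x)) (w := fun t => t ^ (1 - b)) hf.aemeasurable
      (by fun_prop) ((ae_restrict_mem measurableSet_Ioc).mono fun t ht =>
        Real.rpow_pos_of_pos ht.1 _)
    have hweight : ∫⁻ t in Ioc 0 x, ENNReal.ofReal (t ^ (1 - b))⁻¹ =
        ENNReal.ofReal (x ^ b / b) := by
      rw [setLIntegral_congr_fun measurableSet_Ioc fun t ht => by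
          rw [← Real.rpow_neg ht.1.le, neg_sub],
        lintegral_Ioc_zero_rpow (by linarith) hx.le, sub_add_cancel]
    rw [intervalIntegral.integral_of_le hx.le, ENNReal.ofReal_mul (sq_nonneg _)]
    calc _ ≤ (∫⁻ t in Ioc 0 x, g t) * ENNReal.ofReal (x ^ b / b) *
          ENNReal.ofReal (x ^ (-(2 * b + 1))) := by
          rw [← hweight]
          exact mul_le_mul_left hCS _
      _ = (∫⁻ t in Ioc 0 x, g t) * w x := by
          rw [mul_assoc, ← ENNReal.ofReal_mul (by positivity)]
          congr 2
          rw [div_mul_eq_mul_div, ← Real.rpow_add hx]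
          ring_nf
  have htail : ∀ t ∈ Ioi (0 : ℝ), g t * ∫⁻ x in Ici t, w x =
      ENNReal.ofReal (4 / (2 * b + 1 - 1) ^ 2) *
        ENNReal.ofReal (f t ^ 2 * t ^ (2 - (2 * b + 1))) := by
    intro t (ht : 0 < t)
    have hw_int : ∫⁻ x in Ici t, w x = ENNReal.ofReal (b⁻¹ * (t ^ (-b) / b)) := by
      simp_rw [w, ENNReal.ofReal_mul (inv_nonneg.2 hb.le)]
      rw [lintegral_const_mul' _ _ ENNReal.ofReal_ne_top, lintegral_Ici_rpow (by linarith) ht]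
      ring_nf
    rw [hw_int, ← ENNReal.ofReal_mul (by positivity), ← ENNReal.ofReal_mul (by positivity)]
    congr 1
    rw [show 2 - (2 * b + 1) = (1 - b) + -b by ring, Real.rpow_add ht]
    field_simp
    ring
  calc _ ≤ ∫⁻ x in Ioi 0, (∫⁻ t in Ioc 0 x, g t) * w x :=
        setLIntegral_mono' measurableSet_Ioi hpointwise
    _ = ∫⁻ t in Ioi 0, g t * ∫⁻ x in Ici t, w x :=
        lintegral_Ioi_mul_setLIntegral_Ioc (by fun_prop) (by fun_prop) 0
    _ = _ := by
        rw [setLIntegral_congr_fun measurableSet_Ioi htail,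
          lintegral_const_mul' _ _ ENNReal.ofReal_ne_top]

theorem iteratedDeriv_eq_intervalIntegral_iteratedDeriv_succ {u : ℝ → ℝ} {i : ℕ}
    (hu : ContDiff ℝ (i + 1) u) (h0 : iteratedDeriv i u 0 = 0) (x : ℝ) :
    iteratedDeriv i u x = ∫ t in 0..x, iteratedDeriv (i + 1) u t := by
  rw [iteratedDeriv_succ, intervalIntegral.integral_deriv_eq_sub
      (fun y _ => (hu.differentiable_iteratedDeriv' i).differentiableAt)
      ((iteratedDeriv_succ (f := u) ▸ hu.continuous_iteratedDeriv' (i + 1)).intervalIntegrable _ _),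
    h0, sub_zero]

/-- The `i`-th term of the squared `H^k₀` norm on the half-line with measure `r dr`. -/
noncomputable def kondratievTerm (u : ℝ → ℝ) (k i : ℕ) : ℝ≥0∞ :=
  ∫⁻ r in Ioi 0, ENNReal.ofReal (iteratedDeriv i u r ^ 2 * r ^ (2 * (i : ℝ) - 2 * (k : ℝ)) * r)

theorem kondratievTerm_zero (u : ℝ → ℝ) (k : ℕ) :
    kondratievTerm u k 0 =
      ∫⁻ r in Ioi 0, ENNReal.ofReal (u r ^ 2 * r ^ (-(2 * (k : ℝ))) * r) := by
  simp [kondratievTerm]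

theorem kondratievTerm_pred (u : ℝ → ℝ) {k : ℕ} (hk : 1 ≤ k) :
    kondratievTerm u k (k - 1) =
      ∫⁻ r in Ioi 0, ENNReal.ofReal (iteratedDeriv (k - 1) u r ^ 2 * r ^ (-2 : ℝ) * r) := by
  rw [kondratievTerm, Nat.cast_sub hk]
  ring_nf

theorem kondratievTerm_self (u : ℝ → ℝ) (k : ℕ) :
    kondratievTerm u k k = ∫⁻ r in Ioi 0, ENNReal.ofReal (iteratedDeriv k u r ^ 2 * r) := by
  simp [kondratievTerm]

theorem kondratievTerm_le_succ {u : ℝ → ℝ} {k i : ℕ} (hu : ContDiff ℝ (i + 1) u)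
    (hik : i + 2 ≤ k) (h0 : iteratedDeriv i u 0 = 0) :
    kondratievTerm u k i ≤ kondratievTerm u k (i + 1) := by
  set a : ℝ := 2 * k - 2 * i - 1 with ha_def
  have ha : 3 ≤ a := by
    have : (i : ℝ) + 2 ≤ k := by exact_mod_cast hik
    linarith
  calc kondratievTerm u k i
      = ∫⁻ r in Ioi 0, ENNReal.ofReal
          ((∫ t in 0..r, iteratedDeriv (i + 1) u t) ^ 2 * r ^ (-a)) := by
        refine setLIntegral_congr_fun measurableSet_Ioi fun r (hr : 0 < r) => ?_
        rw [← iteratedDeriv_eq_intervalIntegral_iteratedDeriv_succ hu h0, mul_assoc,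
          ← Real.rpow_add_one hr.ne', ha_def]
        ring_nf
    _ ≤ ENNReal.ofReal (4 / (a - 1) ^ 2) *
          ∫⁻ r in Ioi 0, ENNReal.ofReal (iteratedDeriv (i + 1) u r ^ 2 * r ^ (2 - a)) :=
        hardy_inequality (hu.continuous_iteratedDeriv' (i + 1)).measurable (by linarith)
    _ ≤ 1 * ∫⁻ r in Ioi 0, ENNReal.ofReal (iteratedDeriv (i + 1) u r ^ 2 * r ^ (2 - a)) := by
        gcongr
        rw [ENNReal.ofReal_le_one, div_le_one (by nlinarith)]
        nlinarith
    _ = kondratievTerm u k (i + 1) := by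
        rw [one_mul]
        refine setLIntegral_congr_fun measurableSet_Ioi fun r (hr : 0 < r) => ?_
        rw [mul_assoc, ← Real.rpow_add_one hr.ne', ha_def]
        push_cast
        ring_nf

theorem kondratievTerm_monotoneOn {u : ℝ → ℝ} {k : ℕ} (hu : ContDiff ℝ (k - 1 : ℕ) u)
    (h0 : ∀ i < k - 1, iteratedDeriv i u 0 = 0) :
    MonotoneOn (kondratievTerm u k) (Iic (k - 1)) := by
  refine monotoneOn_of_le_succ ordConnected_Iic fun i _ _ hi => ?_
  simp only [Order.succ_eq_add_one, mem_Iic] at hi ⊢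
  exact kondratievTerm_le_succ (hu.of_le (by exact_mod_cast hi)) (by omega) (h0 i (by omega))

theorem sum_kondratievTerm_le {u : ℝ → ℝ} {k : ℕ} (hu : ContDiff ℝ (k - 1 : ℕ) u)
    (h0 : ∀ i < k - 1, iteratedDeriv i u 0 = 0) :
    ∑ i ∈ Finset.range (k + 1), kondratievTerm u k i ≤
      (k + 1) * (kondratievTerm u k k + kondratievTerm u k (k - 1)) := by
  have hmono := kondratievTerm_monotoneOn hu h0
  calc ∑ i ∈ Finset.range (k + 1), kondratievTerm u k i
      ≤ ∑ _i ∈ Finset.range (k + 1), (kondratievTerm u k k + kondratievTerm u k (k - 1)) := by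
        refine Finset.sum_le_sum fun i hi => ?_
        rcases Nat.lt_or_ge i k with hik | hik
        · exact (hmono (by simp; omega) (by simp) (by omega)).trans le_add_self
        · rw [show i = k by simp at hi; omega]
          exact le_self_add
    _ = (k + 1) * (kondratievTerm u k k + kondratievTerm u k (k - 1)) := by
        rw [Finset.sum_const, Finset.card_range, nsmul_eq_mul, Nat.cast_add_one]

/-- Kondratiev embedding lemma (Lemma 3.5): if the derivatives of `u` up to order `k-2`
vanish at the origin and `∂^(k-1) u ∈ H¹₀`, then `u ∈ H^k₀` on the half-line with
measure `r dr`. -/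
theorem kondratiev_embedding (k : ℕ) (hk : 2 ≤ k) :
    ∃ c > (0:ℝ), ∃ c' > (0:ℝ), ∀ u : ℝ → ℝ, ContDiff ℝ (⊤ : ℕ∞) u →
      (∀ i < k - 1, iteratedDeriv i u 0 = 0) →
      (∫⁻ r in Ioi (0:ℝ), ENNReal.ofReal ((iteratedDeriv k u r) ^ 2 * r
          + (iteratedDeriv (k - 1) u r) ^ 2 * r ^ (-2 : ℝ) * r)) ≠ ⊤ →
      ((∫⁻ r in Ioi (0:ℝ), ENNReal.ofReal ((u r) ^ 2 * r ^ (-(2 * (k : ℝ))) * r))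
          ≤ ENNReal.ofReal c *
            ∫⁻ r in Ioi (0:ℝ), ENNReal.ofReal ((iteratedDeriv (k - 1) u r) ^ 2 * r ^ (-2 : ℝ) * r)) ∧
      ((∫⁻ r in Ioi (0:ℝ), ENNReal.ofReal (∑ i ∈ Finset.range (k + 1),
            (iteratedDeriv i u r) ^ 2 * r ^ (2 * (i : ℝ) - 2 * (k : ℝ)) * r))
          ≤ ENNReal.ofReal c' *
            ∫⁻ r in Ioi (0:ℝ), ENNReal.ofReal ((iteratedDeriv k u r) ^ 2 * r
              + (iteratedDeriv (k - 1) u r) ^ 2 * r ^ (-2 : ℝ) * r)) := by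
  refine ⟨1, one_pos, k + 1, by positivity, fun u hu h0 _ => ?_⟩
  have hu' : ContDiff ℝ (k - 1 : ℕ) u := hu.of_le (WithTop.coe_le_coe.2 le_top)
  have hcont (i : ℕ) : Continuous (iteratedDeriv i u) :=
    hu.continuous_iteratedDeriv i (by exact_mod_cast le_top)
  have hsum : ∫⁻ r in Ioi 0, ENNReal.ofReal (∑ i ∈ Finset.range (k + 1),
        iteratedDeriv i u r ^ 2 * r ^ (2 * (i : ℝ) - 2 * (k : ℝ)) * r) =
      ∑ i ∈ Finset.range (k + 1), kondratievTerm u k i := by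
    rw [setLIntegral_congr_fun measurableSet_Ioi fun r (hr : 0 < r) =>
      ENNReal.ofReal_sum_of_nonneg fun i _ => by positivity]
    exact lintegral_finsetSum' _ fun i _ => by fun_prop
  have hsplit : ∫⁻ r in Ioi 0, ENNReal.ofReal (iteratedDeriv k u r ^ 2 * r
        + iteratedDeriv (k - 1) u r ^ 2 * r ^ (-2 : ℝ) * r) =
      kondratievTerm u k k + kondratievTerm u k (k - 1) := by
    rw [kondratievTerm_self, kondratievTerm_pred u (by omega), ← lintegral_add_left (by fun_prop)]
    exact setLIntegral_congr_fun measurableSet_Ioi fun r (hr : 0 < r) =>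
      ENNReal.ofReal_add (by positivity) (by positivity)
  constructor
  · rw [ENNReal.ofReal_one, one_mul, ← kondratievTerm_zero, ← kondratievTerm_pred u (by omega)]
    exact kondratievTerm_monotoneOn hu' h0 (by simp) (by simp) (Nat.zero_le _)
  · rw [hsum, hsplit]
    exact (sum_kondratievTerm_le hu' h0).trans_eq (by norm_cast)
end

section
/- Let Ω = (0,R) × (−a,a) with measure r dr dz and let ψ₁ be a smooth solution of −ψ₁,rr − (3/r)ψ₁,r − ψ₁,zz = ω₁ with ψ₁ = 0 on r = R and z = ±a, and with ψ₁,r and ψ₁,z vanishing at r = 0. Then ∫_Ω (ψ₁,rz² + ψ₁,zz²) r dr dz + ∫_{−a}^a ψ₁,z(0,z)² dz ≤ ∫_Ω ω₁² r dr dz. -/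
/-!
Multiplying the equation by `r ψ_zz` gives the divergence identity
`∂_r P + ∂_z Q = r ω ψ_zz + r (ψ_rz² + ψ_zz²)` with `P = ψ_z² - r ψ_r ψ_zz` and
`Q = r ψ_r ψ_rz - 2 ψ_r ψ_z`. The field `(P, Q)` has no flux through the boundary of the
rectangle: `ψ_z = ψ_zz = 0` on `r = R`, `ψ_z = 0` and the weight `r` vanish on the axis, and
`ψ_r = 0` on `z = ±a`. So the energy `∫ r (ψ_rz² + ψ_zz²)` equals the integral of
`r (ψ_rz² + ψ_zz²) - 2 (∂_r P + ∂_z Q) = r ω² - r (ω + ψ_zz)² - r ψ_rz² ≤ r ω²`.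
The axis term vanishes because `ψ_z(0, ·) = 0`.
-/

open MeasureTheory Set

noncomputable def pdr (f : ℝ → ℝ → ℝ) : ℝ → ℝ → ℝ := fun r z => deriv (fun s => f s z) r
noncomputable def pdz (f : ℝ → ℝ → ℝ) : ℝ → ℝ → ℝ := fun r z => deriv (fun w => f r w) z

theorem eqOn_deriv_zero_of_eqOn_zero {g : ℝ → ℝ} {s : Set ℝ} (hs : IsOpen s) (hg : EqOn g 0 s) :
    EqOn (deriv g) 0 s := fun x hx => by
  simpa using hg.deriv hs hx

section PartialDerivatives

variable {f : ℝ → ℝ → ℝ} {r z : ℝ} {m n : WithTop ℕ∞}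

theorem hasDerivAt_fderiv_apply_one_zero (hf : DifferentiableAt ℝ (Function.uncurry f) (r, z)) :
    HasDerivAt (fun s => f s z) (fderiv ℝ (Function.uncurry f) (r, z) (1, 0)) r := by
  exact hf.hasFDerivAt.comp_hasDerivAt r ((hasDerivAt_id r).prodMk (hasDerivAt_const r z))

theorem hasDerivAt_fderiv_apply_zero_one (hf : DifferentiableAt ℝ (Function.uncurry f) (r, z)) :
    HasDerivAt (fun w => f r w) (fderiv ℝ (Function.uncurry f) (r, z) (0, 1)) z := by
  exact hf.hasFDerivAt.comp_hasDerivAt z ((hasDerivAt_const z r).prodMk (hasDerivAt_id z))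

theorem pdr_eq_fderiv (hf : DifferentiableAt ℝ (Function.uncurry f) (r, z)) :
    pdr f r z = fderiv ℝ (Function.uncurry f) (r, z) (1, 0) :=
  (hasDerivAt_fderiv_apply_one_zero hf).deriv

theorem pdz_eq_fderiv (hf : DifferentiableAt ℝ (Function.uncurry f) (r, z)) :
    pdz f r z = fderiv ℝ (Function.uncurry f) (r, z) (0, 1) :=
  (hasDerivAt_fderiv_apply_zero_one hf).deriv

theorem hasDerivAt_pdr (hf : DifferentiableAt ℝ (Function.uncurry f) (r, z)) :
    HasDerivAt (fun s => f s z) (pdr f r z) r :=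
  pdr_eq_fderiv hf ▸ hasDerivAt_fderiv_apply_one_zero hf

theorem hasDerivAt_pdz (hf : DifferentiableAt ℝ (Function.uncurry f) (r, z)) :
    HasDerivAt (fun w => f r w) (pdz f r z) z :=
  pdz_eq_fderiv hf ▸ hasDerivAt_fderiv_apply_zero_one hf

theorem uncurry_pdr (hf : Differentiable ℝ (Function.uncurry f)) :
    Function.uncurry (pdr f) = fun p => fderiv ℝ (Function.uncurry f) p (1, 0) :=
  funext fun p => pdr_eq_fderiv (hf p)

theorem uncurry_pdz (hf : Differentiable ℝ (Function.uncurry f)) :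
    Function.uncurry (pdz f) = fun p => fderiv ℝ (Function.uncurry f) p (0, 1) :=
  funext fun p => pdz_eq_fderiv (hf p)

theorem ContDiff.pdr (hf : ContDiff ℝ n (Function.uncurry f)) (hmn : m + 1 ≤ n) :
    ContDiff ℝ m (Function.uncurry (pdr f)) := by
  rw [uncurry_pdr ((hf.of_le (le_add_self.trans hmn)).differentiable one_ne_zero)]
  exact (hf.fderiv_right hmn).clm_apply contDiff_const

theorem ContDiff.pdz (hf : ContDiff ℝ n (Function.uncurry f)) (hmn : m + 1 ≤ n) :
    ContDiff ℝ m (Function.uncurry (pdz f)) := by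
  rw [uncurry_pdz ((hf.of_le (le_add_self.trans hmn)).differentiable one_ne_zero)]
  exact (hf.fderiv_right hmn).clm_apply contDiff_const

theorem pdr_pdz_comm (hf : ContDiff ℝ 2 (Function.uncurry f)) (r z : ℝ) :
    pdr (pdz f) r z = pdz (pdr f) r z := by
  have hdf : Differentiable ℝ (Function.uncurry f) := hf.differentiable (by norm_num)
  have hdf' : Differentiable ℝ (fderiv ℝ (Function.uncurry f)) :=
    (hf.fderiv_right (m := 1) (by norm_num)).differentiable one_ne_zero
  rw [pdr_eq_fderiv ((hf.pdz (m := 1) (by norm_num)).differentiable one_ne_zero _),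
    pdz_eq_fderiv ((hf.pdr (m := 1) (by norm_num)).differentiable one_ne_zero _),
    uncurry_pdz hdf, uncurry_pdr hdf, fderiv_clm_apply (hdf' _) (differentiableAt_const _),
    fderiv_clm_apply (hdf' _) (differentiableAt_const _)]
  simpa using hf.contDiffAt.isSymmSndFDerivAt (by simp) (1, 0) (0, 1)

end PartialDerivatives

section RectangleIntegrals

variable {a b c d : ℝ}

theorem Continuous.integrableOn_Ioo_prod_Ioo {F : ℝ → ℝ → ℝ}
    (hF : Continuous (Function.uncurry F)) :
    IntegrableOn (fun p : ℝ × ℝ => F p.1 p.2) (Ioo a b ×ˢ Ioo c d) := by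
  refine (hF.integrableOn_Icc (a := (a, c)) (b := (b, d))).mono_set ?_
  rw [← Icc_prod_Icc]
  exact prod_mono Ioo_subset_Icc_self Ioo_subset_Icc_self

theorem setIntegral_Ioo_prod_Ioo_pdz {F : ℝ → ℝ → ℝ} (hF : ContDiff ℝ 1 (Function.uncurry F))
    (hcd : c ≤ d) :
    ∫ p in Ioo a b ×ˢ Ioo c d, pdz F p.1 p.2 = ∫ r in Ioo a b, (F r d - F r c) := by
  have hcont : Continuous (Function.uncurry (pdz F)) := (hF.pdz (m := 0) le_rfl).continuous
  rw [Measure.volume_eq_prod,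
    setIntegral_prod (fun p => pdz F p.1 p.2) hcont.integrableOn_Ioo_prod_Ioo]
  refine setIntegral_congr_fun measurableSet_Ioo fun r _ => ?_
  rw [← integral_Ioc_eq_integral_Ioo, ← intervalIntegral.integral_of_le hcd]
  exact intervalIntegral.integral_eq_sub_of_hasDerivAt
    (fun z _ => hasDerivAt_pdz (hF.differentiable one_ne_zero _))
    ((hcont.comp (continuous_const.prodMk continuous_id)).intervalIntegrable _ _)

theorem setIntegral_Ioo_prod_Ioo_pdr {F : ℝ → ℝ → ℝ} (hF : ContDiff ℝ 1 (Function.uncurry F))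
    (hab : a ≤ b) :
    ∫ p in Ioo a b ×ˢ Ioo c d, pdr F p.1 p.2 = ∫ z in Ioo c d, (F b z - F a z) := by
  have hflip : ContDiff ℝ 1 (Function.uncurry (flip F)) :=
    hF.comp (contDiff_snd.prodMk contDiff_fst)
  rw [Measure.volume_eq_prod, ← setIntegral_prod_swap]
  exact setIntegral_Ioo_prod_Ioo_pdz hflip hab

theorem lintegral_Ioo_lintegral_Ioo {F : ℝ → ℝ → ENNReal}
    (hF : Measurable (Function.uncurry F)) :
    ∫⁻ z in Ioo c d, ∫⁻ r in Ioo a b, F r z = ∫⁻ p in Ioo a b ×ˢ Ioo c d, F p.1 p.2 := by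
  rw [Measure.volume_eq_prod, ← Measure.prod_restrict]
  exact (lintegral_prod_symm _ hF.aemeasurable).symm

end RectangleIntegrals

theorem ofReal_integral_le_lintegral_ofReal {α : Type*} [MeasurableSpace α] {μ : Measure α}
    {f : α → ℝ} (hf : Integrable f μ) :
    ENNReal.ofReal (∫ x, f x ∂μ) ≤ ∫⁻ x, ENNReal.ofReal (f x) ∂μ :=
  calc ENNReal.ofReal (∫ x, f x ∂μ)
      ≤ ENNReal.ofReal (∫ x, max (f x) 0 ∂μ) :=
        ENNReal.ofReal_le_ofReal (integral_mono hf hf.pos_part fun x => le_max_left _ _)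
    _ = ∫⁻ x, ENNReal.ofReal (f x) ∂μ := by
        rw [ofReal_integral_eq_lintegral_ofReal hf.pos_part
          (Filter.Eventually.of_forall fun x => le_max_right _ _)]
        simp

theorem lintegral_ofReal_le_of_setIntegral_eq_zero {a b c d : ℝ} {E D g : ℝ → ℝ → ℝ}
    (hE : Continuous (Function.uncurry E)) (hD : Continuous (Function.uncurry D))
    (hE_nonneg : ∀ r ∈ Ioo a b, ∀ z ∈ Ioo c d, 0 ≤ E r z)
    (hD_zero : ∫ p in Ioo a b ×ˢ Ioo c d, D p.1 p.2 = 0)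
    (hle : ∀ r ∈ Ioo a b, ∀ z ∈ Ioo c d, E r z - D r z ≤ g r z) :
    ∫⁻ z in Ioo c d, ∫⁻ r in Ioo a b, ENNReal.ofReal (E r z) ≤
      ∫⁻ z in Ioo c d, ∫⁻ r in Ioo a b, ENNReal.ofReal (g r z) := by
  have hE_sub_D : Continuous (Function.uncurry fun r z => E r z - D r z) := hE.sub hD
  calc _ = ∫⁻ p in Ioo a b ×ˢ Ioo c d, ENNReal.ofReal (E p.1 p.2) :=
        lintegral_Ioo_lintegral_Ioo (F := fun r z => ENNReal.ofReal (E r z))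
          (ENNReal.measurable_ofReal.comp hE.measurable)
    _ = ENNReal.ofReal (∫ p in Ioo a b ×ˢ Ioo c d, E p.1 p.2) := by
        refine (ofReal_integral_eq_lintegral_ofReal hE.integrableOn_Ioo_prod_Ioo ?_).symm
        filter_upwards [ae_restrict_mem (measurableSet_Ioo.prod measurableSet_Ioo)] with p hp
        exact hE_nonneg p.1 hp.1 p.2 hp.2
    _ = ENNReal.ofReal (∫ p in Ioo a b ×ˢ Ioo c d, (E p.1 p.2 - D p.1 p.2)) := by
        rw [integral_sub hE.integrableOn_Ioo_prod_Ioo hD.integrableOn_Ioo_prod_Ioo, hD_zero,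
          sub_zero]
    _ ≤ ∫⁻ p in Ioo a b ×ˢ Ioo c d, ENNReal.ofReal (E p.1 p.2 - D p.1 p.2) :=
        ofReal_integral_le_lintegral_ofReal hE_sub_D.integrableOn_Ioo_prod_Ioo
    _ = ∫⁻ z in Ioo c d, ∫⁻ r in Ioo a b, ENNReal.ofReal (E r z - D r z) :=
        (lintegral_Ioo_lintegral_Ioo (F := fun r z => ENNReal.ofReal (E r z - D r z))
          (ENNReal.measurable_ofReal.comp hE_sub_D.measurable)).symm
    -- `g` is not assumed measurable, so it is only compared on iterated integrals.
    _ ≤ _ := setLIntegral_mono' measurableSet_Ioo fun z hz =>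
        setLIntegral_mono' measurableSet_Ioo fun r hr => ENNReal.ofReal_le_ofReal (hle r hr z hz)

section EnergyFlux

variable {ψ : ℝ → ℝ → ℝ}

noncomputable def energyFluxR (ψ : ℝ → ℝ → ℝ) : ℝ → ℝ → ℝ := fun r z =>
  pdz ψ r z ^ 2 - r * pdr ψ r z * pdz (pdz ψ) r z

noncomputable def energyFluxZ (ψ : ℝ → ℝ → ℝ) : ℝ → ℝ → ℝ := fun r z =>
  r * pdr ψ r z * pdr (pdz ψ) r z - 2 * pdr ψ r z * pdz ψ r z

noncomputable def energyFluxDiv (ψ : ℝ → ℝ → ℝ) : ℝ → ℝ → ℝ := fun r z =>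
  pdr (energyFluxR ψ) r z + pdz (energyFluxZ ψ) r z

noncomputable def energyDensity (ψ : ℝ → ℝ → ℝ) : ℝ → ℝ → ℝ := fun r z =>
  (pdr (pdz ψ) r z ^ 2 + pdz (pdz ψ) r z ^ 2) * r

theorem contDiff_energyFluxR (hψ : ContDiff ℝ 3 (Function.uncurry ψ)) :
    ContDiff ℝ 1 (Function.uncurry (energyFluxR ψ)) := by
  have hr : ContDiff ℝ 1 (Function.uncurry (pdr ψ)) := hψ.pdr (by norm_num)
  have hz : ContDiff ℝ 2 (Function.uncurry (pdz ψ)) := hψ.pdz (by norm_num)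
  exact ((hz.of_le (by norm_num)).pow 2).sub ((contDiff_fst.mul hr).mul (hz.pdz le_rfl))

theorem contDiff_energyFluxZ (hψ : ContDiff ℝ 3 (Function.uncurry ψ)) :
    ContDiff ℝ 1 (Function.uncurry (energyFluxZ ψ)) := by
  have hr : ContDiff ℝ 1 (Function.uncurry (pdr ψ)) := hψ.pdr (by norm_num)
  have hz : ContDiff ℝ 2 (Function.uncurry (pdz ψ)) := hψ.pdz (by norm_num)
  exact ((contDiff_fst.mul hr).mul (hz.pdr le_rfl)).sub
    ((contDiff_const.mul hr).mul (hz.of_le (by norm_num)))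

theorem energyFluxDiv_eq (hψ : ContDiff ℝ 3 (Function.uncurry ψ)) {r : ℝ} (hr : r ≠ 0) (z : ℝ) :
    energyFluxDiv ψ r z =
      r * (-(pdr (pdr ψ) r z) - 3 / r * pdr ψ r z - pdz (pdz ψ) r z) * pdz (pdz ψ) r z +
        energyDensity ψ r z := by
  have hz : ContDiff ℝ 2 (Function.uncurry (pdz ψ)) := hψ.pdz (by norm_num)
  have diff {g : ℝ → ℝ → ℝ} (hg : ContDiff ℝ 1 (Function.uncurry g)) :
      DifferentiableAt ℝ (Function.uncurry g) (r, z) := hg.differentiable one_ne_zero _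
  have d_r := diff (hψ.pdr (m := 1) (by norm_num))
  have d_z := diff (hz.of_le (by norm_num))
  have d_zz := diff (hz.pdz le_rfl)
  have d_rz := diff (hz.pdr le_rfl)
  have hFluxR : pdr (energyFluxR ψ) r z = 2 * pdz ψ r z * pdr (pdz ψ) r z -
      ((pdr ψ r z + r * pdr (pdr ψ) r z) * pdz (pdz ψ) r z +
        r * pdr ψ r z * pdr (pdz (pdz ψ)) r z) := by
    refine ((hasDerivAt_pdr d_z).pow 2 |>.sub
      (((hasDerivAt_id r).mul (hasDerivAt_pdr d_r)).mul (hasDerivAt_pdr d_zz))).deriv.trans ?_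
    simp only [Pi.mul_apply, id, Nat.cast_ofNat]
    ring
  have hFluxZ : pdz (energyFluxZ ψ) r z =
      r * pdz (pdr ψ) r z * pdr (pdz ψ) r z + r * pdr ψ r z * pdz (pdr (pdz ψ)) r z -
        2 * (pdz (pdr ψ) r z * pdz ψ r z + pdr ψ r z * pdz (pdz ψ) r z) := by
    refine ((((hasDerivAt_const z r).mul (hasDerivAt_pdz d_r)).mul (hasDerivAt_pdz d_rz)).sub
      (((hasDerivAt_const z (2 : ℝ)).mul (hasDerivAt_pdz d_r)).mul
        (hasDerivAt_pdz d_z))).deriv.trans ?_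
    simp only [Pi.mul_apply]
    ring
  rw [energyFluxDiv, hFluxR, hFluxZ, energyDensity, ← pdr_pdz_comm (hψ.of_le (by norm_num)),
    ← pdr_pdz_comm hz]
  field_simp
  ring

theorem setIntegral_energyFluxDiv_eq_zero (hψ : ContDiff ℝ 3 (Function.uncurry ψ)) {R c d : ℝ}
    (hR : 0 ≤ R) (hcd : c ≤ d) (hbR : ∀ z ∈ Ioo c d, ψ R z = 0)
    (hbc : ∀ r ∈ Ioo 0 R, ψ r c = 0) (hbd : ∀ r ∈ Ioo 0 R, ψ r d = 0)
    (haxis : ∀ z ∈ Ioo c d, pdz ψ 0 z = 0) :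
    ∫ p in Ioo 0 R ×ˢ Ioo c d, energyFluxDiv ψ p.1 p.2 = 0 := by
  have hFR := contDiff_energyFluxR hψ
  have hFZ := contDiff_energyFluxZ hψ
  have hz_R : EqOn (pdz ψ R) 0 (Ioo c d) := eqOn_deriv_zero_of_eqOn_zero isOpen_Ioo hbR
  have hzz_R : EqOn (pdz (pdz ψ) R) 0 (Ioo c d) := eqOn_deriv_zero_of_eqOn_zero isOpen_Ioo hz_R
  have hr_c : EqOn (fun r => pdr ψ r c) 0 (Ioo 0 R) :=
    eqOn_deriv_zero_of_eqOn_zero isOpen_Ioo hbc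
  have hr_d : EqOn (fun r => pdr ψ r d) 0 (Ioo 0 R) :=
    eqOn_deriv_zero_of_eqOn_zero isOpen_Ioo hbd
  simp only [energyFluxDiv]
  rw [integral_add ((hFR.pdr (m := 0) le_rfl).continuous.integrableOn_Ioo_prod_Ioo)
      ((hFZ.pdz (m := 0) le_rfl).continuous.integrableOn_Ioo_prod_Ioo),
    setIntegral_Ioo_prod_Ioo_pdr hFR hR, setIntegral_Ioo_prod_Ioo_pdz hFZ hcd,
    setIntegral_eq_zero_of_forall_eq_zero, setIntegral_eq_zero_of_forall_eq_zero, add_zero]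
  · intro r hr
    simp [energyFluxZ, hr_c hr, hr_d hr]
  · intro z hz
    simp [energyFluxR, hz_R hz, hzz_R hz, haxis z hz]

theorem continuous_energyDensity (hψ : ContDiff ℝ 2 (Function.uncurry ψ)) :
    Continuous (Function.uncurry (energyDensity ψ)) := by
  have hz : ContDiff ℝ 1 (Function.uncurry (pdz ψ)) := hψ.pdz (by norm_num)
  exact (((hz.pdr (m := 0) (by norm_num)).continuous.pow 2).add
    ((hz.pdz (m := 0) (by norm_num)).continuous.pow 2)).mul continuous_fst

theorem continuous_energyFluxDiv (hψ : ContDiff ℝ 3 (Function.uncurry ψ)) :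
    Continuous (Function.uncurry (energyFluxDiv ψ)) :=
  ((contDiff_energyFluxR hψ).pdr (m := 0) le_rfl).continuous.add
    ((contDiff_energyFluxZ hψ).pdz (m := 0) le_rfl).continuous

theorem energyDensity_sub_two_mul_energyFluxDiv_le (hψ : ContDiff ℝ 3 (Function.uncurry ψ))
    {r : ℝ} (hr : 0 < r) (z : ℝ) :
    energyDensity ψ r z - 2 * energyFluxDiv ψ r z ≤
      (-(pdr (pdr ψ) r z) - 3 / r * pdr ψ r z - pdz (pdz ψ) r z) ^ 2 * r := by
  set w := -(pdr (pdr ψ) r z) - 3 / r * pdr ψ r z - pdz (pdz ψ) r z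
  rw [energyFluxDiv_eq hψ hr.ne', energyDensity]
  nlinarith [mul_nonneg hr.le (sq_nonneg (w + pdz (pdz ψ) r z)),
    mul_nonneg hr.le (sq_nonneg (pdr (pdz ψ) r z))]

end EnergyFlux

/-- First energy inequality of Lemma 3.8 (inequality (3.42)). -/
theorem energy_estimate_342 (R a : ℝ) (hR : 0 < R) (ha : 0 < a)
    (ψ ω : ℝ → ℝ → ℝ)
    (hsm : ContDiff ℝ (⊤ : ℕ∞) (Function.uncurry ψ))
    (hpde : ∀ r ∈ Ioo 0 R, ∀ z ∈ Ioo (-a) a,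
      -(pdr (pdr ψ) r z) - 3 / r * pdr ψ r z - pdz (pdz ψ) r z = ω r z)
    (hbR : ∀ z ∈ Icc (-a) a, ψ R z = 0)
    (hba : ∀ r ∈ Icc 0 R, ψ r a = 0 ∧ ψ r (-a) = 0)
    (haxis : ∀ z ∈ Icc (-a) a, pdr ψ 0 z = 0 ∧ pdz ψ 0 z = 0) :
    (∫⁻ z in Ioo (-a) a, ∫⁻ r in Ioo (0:ℝ) R,
        ENNReal.ofReal (((pdr (pdz ψ) r z) ^ 2 + (pdz (pdz ψ) r z) ^ 2) * r))
      + (∫⁻ z in Ioo (-a) a, ENNReal.ofReal ((pdz ψ 0 z) ^ 2))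
      ≤ ∫⁻ z in Ioo (-a) a, ∫⁻ r in Ioo (0:ℝ) R, ENNReal.ofReal ((ω r z) ^ 2 * r) := by
  have hψ : ContDiff ℝ 3 (Function.uncurry ψ) := hsm.of_le (by norm_cast)
  have hdiv : ∫ p in Ioo 0 R ×ˢ Ioo (-a) a, energyFluxDiv ψ p.1 p.2 = 0 :=
    setIntegral_energyFluxDiv_eq_zero hψ hR.le (by linarith)
      (fun z hz => hbR z (Ioo_subset_Icc_self hz))
      (fun r hr => (hba r (Ioo_subset_Icc_self hr)).2)
      (fun r hr => (hba r (Ioo_subset_Icc_self hr)).1)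
      (fun z hz => (haxis z (Ioo_subset_Icc_self hz)).2)
  have haxis_term : ∫⁻ z in Ioo (-a) a, ENNReal.ofReal (pdz ψ 0 z ^ 2) = 0 := by
    refine (setLIntegral_congr_fun measurableSet_Ioo fun z hz => ?_).trans lintegral_zero
    simp [(haxis z (Ioo_subset_Icc_self hz)).2]
  rw [haxis_term, add_zero]
  refine lintegral_ofReal_le_of_setIntegral_eq_zero (D := fun r z => 2 * energyFluxDiv ψ r z)
    (continuous_energyDensity (hψ.of_le (by norm_num)))
    ((continuous_const_mul 2).comp (continuous_energyFluxDiv hψ))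
    (fun r hr z _ => ?_) ?_ fun r hr z hz => ?_
  · exact mul_nonneg (by positivity) hr.1.le
  · rw [integral_const_mul, hdiv, mul_zero]
  · exact hpde r hr z hz ▸ energyDensity_sub_two_mul_energyFluxDiv_le hψ hr.1 z
end

section
/- Let u : (0,∞) → ℝ be smooth with u(0) = u₀, and let K : [0,∞) → ℝ be smooth with compact support satisfying K(r)/r² → c₀ < ∞ as r → 0⁺. Define χ(r) = ∫₀^r u'(τ)(1 + K(τ)) dτ. Then χ(0) = 0, (u − χ − u₀)(0) = 0, and (u − χ − u₀)'(r) = −u'(r) K(r); moreover there exists c > 0 depending only on K such that ∫₀^∞ (|(u−χ−u₀)''|² + r^(−2)|(u−χ−u₀)'|² + r^(−4)|u−χ−u₀|²) r dr ≤ c ∫₀^∞ (|u''|² + |u'|² + |u|²) r dr, provided u ∈ H²((0,∞), r dr). -/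
/-!
On `r > 0` the remainder `v = u - χ - u(0)` equals `-∫₀^r u'K`, so `v' = -u'K` and
`v'' = -(u''K + u'K')`. Since `K` and `K'` are bounded and `|K(r)| ≤ C min(r, R)²` (quadratic
vanishing at `0`, `K = 0` on `[R, ∞)`), the terms `|v''|² r` and `|v'|² r⁻¹` are bounded pointwise
by the integrand of the `H²` norm of `u`. For `|v|² r⁻³`, Cauchy–Schwarz with the weights `τ` and
`τ⁻¹` gives `v(r)² ≤ (∫₀^∞ u'² τ dτ) · C² min(r, R)³ r`, and `∫₀^∞ min(r, R)³ r⁻² dr ≤ 2R²`.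
-/

open MeasureTheory Set Filter Topology
open scoped ENNReal

theorem ofReal_sq_integral_mul_le {α : Type*} [MeasurableSpace α] {μ : Measure α} {f g : α → ℝ}
    (hf : AEMeasurable f μ) (hg : AEMeasurable g μ) :
    ENNReal.ofReal ((∫ x, f x * g x ∂μ) ^ 2) ≤
      (∫⁻ x, ENNReal.ofReal (f x ^ 2) ∂μ) * ∫⁻ x, ENNReal.ofReal (g x ^ 2) ∂μ := by
  have hsq : ∀ y : ℝ, ENNReal.ofReal (y ^ 2) = ‖y‖ₑ ^ (2 : ℝ) := fun y => by
    rw [Real.enorm_eq_ofReal_abs, ← sq_abs, ENNReal.ofReal_pow (abs_nonneg y),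
      ENNReal.rpow_two]
  have hholder := ENNReal.lintegral_mul_le_Lp_mul_Lq μ Real.HolderConjugate.two_two
    hf.enorm hg.enorm
  simp only [hsq, Pi.mul_apply, ← enorm_mul] at hholder ⊢
  calc ‖∫ x, f x * g x ∂μ‖ₑ ^ (2 : ℝ) ≤ (∫⁻ x, ‖f x * g x‖ₑ ∂μ) ^ (2 : ℝ) := by
        gcongr; exact enorm_integral_le_lintegral_enorm _
    _ ≤ ((∫⁻ x, ‖f x‖ₑ ^ (2 : ℝ) ∂μ) ^ (1 / 2 : ℝ) *
          (∫⁻ x, ‖g x‖ₑ ^ (2 : ℝ) ∂μ) ^ (1 / 2 : ℝ)) ^ (2 : ℝ) := by gcongr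
    _ = _ := by
        rw [ENNReal.mul_rpow_of_nonneg _ _ zero_le_two, ← ENNReal.rpow_mul, ← ENNReal.rpow_mul]
        norm_num

theorem HasCompactSupport.exists_pos_forall_le_eq_zero {M : Type*} [Zero M] {f : ℝ → M}
    (hf : HasCompactSupport f) : ∃ R > 0, ∀ x, R ≤ x → f x = 0 := by
  rw [hasCompactSupport_iff_eventuallyEq, coclosedCompact_eq_cocompact] at hf
  obtain ⟨a, ha⟩ := eventually_atTop.1 (hf.filter_mono atTop_le_cocompact)
  exact ⟨max a 1, by positivity, fun x hx => ha x (le_of_max_le_left hx)⟩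

theorem exists_abs_le_mul_pow_of_tendsto {f : ℝ → ℝ} {M c : ℝ} {n : ℕ}
    (hM : ∀ x, |f x| ≤ M) (hf : Tendsto (fun r => f r / r ^ n) (𝓝[>] 0) (𝓝 c)) :
    ∃ C, ∀ r > 0, |f r| ≤ C * r ^ n := by
  obtain ⟨δ, hδ : 0 < δ, hδf⟩ := mem_nhdsGT_iff_exists_Ioo_subset.1
    (hf.abs.eventually (gt_mem_nhds (lt_add_one |c|)))
  refine ⟨max (|c| + 1) (M / δ ^ n), fun r hr => ?_⟩
  have hrn : 0 < r ^ n := pow_pos hr n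
  rcases lt_or_ge r δ with hrδ | hδr
  · have h : |f r / r ^ n| < |c| + 1 := hδf ⟨hr, hrδ⟩
    rw [abs_div, abs_of_pos hrn, div_lt_iff₀ hrn] at h
    exact h.le.trans (mul_le_mul_of_nonneg_right (le_max_left _ _) hrn.le)
  · have hM0 : 0 ≤ M := (abs_nonneg _).trans (hM 0)
    calc |f r| ≤ M / δ ^ n * δ ^ n := by rw [div_mul_cancel₀ _ (pow_pos hδ n).ne']; exact hM r
      _ ≤ M / δ ^ n * r ^ n := by
          have := div_nonneg hM0 (pow_nonneg hδ.le n)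
          gcongr
      _ ≤ _ := mul_le_mul_of_nonneg_right (le_max_right _ _) hrn.le

theorem exists_abs_le_mul_min_sq {K : ℝ → ℝ} {c₀ : ℝ} (hK : Continuous K)
    (hKsupp : HasCompactSupport K) (hKlim : Tendsto (fun r => K r / r ^ 2) (𝓝[>] 0) (𝓝 c₀)) :
    ∃ C R, 0 < R ∧ ∀ τ > 0, |K τ| ≤ C * min τ R ^ 2 := by
  obtain ⟨R, hR, hKR⟩ := hKsupp.exists_pos_forall_le_eq_zero
  obtain ⟨M, hM⟩ := hKsupp.exists_bound_of_continuous hK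
  obtain ⟨C, hC⟩ := exists_abs_le_mul_pow_of_tendsto (fun x => by simpa using hM x) hKlim
  refine ⟨C, R, hR, fun τ hτ => ?_⟩
  rcases le_or_gt R τ with hRτ | hτR
  · have hC0 : 0 ≤ C := by simpa using (abs_nonneg _).trans (hC 1 one_pos)
    rw [hKR τ hRτ, abs_zero]
    positivity
  · rw [min_eq_left hτR.le]
    exact hC τ hτ

theorem abs_le_mul_mul_of_abs_le_mul_min_sq {x C R r : ℝ} (hr : 0 < r) (hR : 0 < R)
    (h : |x| ≤ C * min r R ^ 2) : |x| ≤ C * R * r := by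
  have hm : 0 < min r R := lt_min hr hR
  have hC : 0 ≤ C := nonneg_of_mul_nonneg_left ((abs_nonneg x).trans h) (by positivity)
  calc |x| ≤ C * (min r R * min r R) := by rwa [← sq]
    _ ≤ C * (R * r) := by gcongr; exacts [min_le_right r R, min_le_left r R]
    _ = C * R * r := by ring

theorem sq_div_le_of_abs_le_mul_min_sq {x C R τ r : ℝ}
    (hx : |x| ≤ C * min τ R ^ 2) (hR : 0 < R) (hτ : 0 < τ) (hτr : τ ≤ r) :
    x ^ 2 / τ ≤ C ^ 2 * min r R ^ 3 := by
  have hm : 0 < min τ R := lt_min hτ hR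
  have hmτ : min τ R ≤ τ := min_le_left τ R
  have hmr : min τ R ≤ min r R := min_le_min_right R hτr
  have hm' : 0 < min r R := lt_min (hτ.trans_le hτr) hR
  rw [div_le_iff₀ hτ]
  calc x ^ 2 ≤ (C * min τ R ^ 2) ^ 2 := sq_le_sq.2 (hx.trans (le_abs_self _))
    _ = C ^ 2 * min τ R ^ 3 * min τ R := by ring
    _ ≤ C ^ 2 * min r R ^ 3 * τ := by gcongr

theorem lintegral_Ioi_min_pow_three_div_sq_le {R : ℝ} (hR : 0 < R) :
    ∫⁻ r in Ioi 0, ENNReal.ofReal (min r R ^ 3 / r ^ 2) ≤ ENNReal.ofReal (2 * R ^ 2) := by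
  rw [← Ioc_union_Ioi_eq_Ioi hR.le, lintegral_union measurableSet_Ioi (Ioc_disjoint_Ioi le_rfl)]
  have hnear : ∫⁻ r in Ioc 0 R, ENNReal.ofReal (min r R ^ 3 / r ^ 2) ≤ ENNReal.ofReal (R ^ 2) :=
    calc ∫⁻ r in Ioc 0 R, ENNReal.ofReal (min r R ^ 3 / r ^ 2)
        ≤ ∫⁻ _ in Ioc 0 R, ENNReal.ofReal R := by
          refine setLIntegral_mono' measurableSet_Ioc fun r ⟨hr, hrR⟩ => ?_
          rw [min_eq_left hrR, pow_succ, mul_div_cancel_left₀ _ (pow_pos hr 2).ne']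
          exact ENNReal.ofReal_le_ofReal hrR
      _ = ENNReal.ofReal (R ^ 2) := by
          rw [setLIntegral_const, Real.volume_Ioc, sub_zero, ← ENNReal.ofReal_mul hR.le, sq]
  have hfar : ∫⁻ r in Ioi R, ENNReal.ofReal (min r R ^ 3 / r ^ 2) = ENNReal.ofReal (R ^ 2) := by
    have hint : IntegrableOn (fun r : ℝ => R ^ 3 * r ^ (-2 : ℝ)) (Ioi R) :=
      (integrableOn_Ioi_rpow_of_lt (by norm_num) hR).const_mul _
    have hpow : ∀ r ∈ Ioi R, ENNReal.ofReal (min r R ^ 3 / r ^ 2) =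
        ENNReal.ofReal (R ^ 3 * r ^ (-2 : ℝ)) := fun r (hr : R < r) => by
      rw [min_eq_right hr.le, Real.rpow_neg (hR.trans hr).le]
      norm_num [div_eq_mul_inv]
    rw [setLIntegral_congr_fun measurableSet_Ioi hpow,
      ← ofReal_integral_eq_lintegral_ofReal hint
        ((ae_restrict_mem measurableSet_Ioi).mono fun r hr => by
          have := Real.rpow_nonneg (hR.trans hr).le (-2)
          positivity),
      integral_const_mul, integral_Ioi_rpow_of_lt (by norm_num) hR]
    congr 1
    rw [show (-2 : ℝ) + 1 = -1 by norm_num, Real.rpow_neg_one]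
    field_simp
  calc _ ≤ ENNReal.ofReal (R ^ 2) + ENNReal.ofReal (R ^ 2) := add_le_add hnear hfar.le
    _ = ENNReal.ofReal (2 * R ^ 2) := by
        rw [← ENNReal.ofReal_add (by positivity) (by positivity)]
        ring_nf

theorem ofReal_sq_intervalIntegral_mul_le {f K : ℝ → ℝ} {C R r : ℝ}
    (hf : Measurable f) (hKm : Measurable K) (hK : ∀ τ > 0, |K τ| ≤ C * min τ R ^ 2)
    (hR : 0 < R) (hr : 0 < r) :
    ENNReal.ofReal ((∫ τ in 0..r, f τ * K τ) ^ 2) ≤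
      (∫⁻ τ in Ioi 0, ENNReal.ofReal (f τ ^ 2 * τ)) *
        ENNReal.ofReal (C ^ 2 * min r R ^ 3 * r) := by
  have hsplit : ∫ τ in 0..r, f τ * K τ = ∫ τ in Ioc 0 r, (f τ * √τ) * (K τ / √τ) := by
    rw [intervalIntegral.integral_of_le hr.le]
    refine setIntegral_congr_fun measurableSet_Ioc fun τ hτ => ?_
    field_simp [(Real.sqrt_pos.2 hτ.1).ne']
  rw [hsplit]
  refine (ofReal_sq_integral_mul_le (by fun_prop) (by fun_prop)).trans (mul_le_mul' ?_ ?_)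
  · calc ∫⁻ τ in Ioc 0 r, ENNReal.ofReal ((f τ * √τ) ^ 2)
        = ∫⁻ τ in Ioc 0 r, ENNReal.ofReal (f τ ^ 2 * τ) :=
          setLIntegral_congr_fun measurableSet_Ioc fun τ hτ => by
            rw [mul_pow, Real.sq_sqrt hτ.1.le]
      _ ≤ _ := lintegral_mono_set Ioc_subset_Ioi_self
  · calc ∫⁻ τ in Ioc 0 r, ENNReal.ofReal ((K τ / √τ) ^ 2)
        ≤ ∫⁻ _ in Ioc 0 r, ENNReal.ofReal (C ^ 2 * min r R ^ 3) :=
          setLIntegral_mono' measurableSet_Ioc fun τ ⟨hτ, hτr⟩ => by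
            rw [div_pow, Real.sq_sqrt hτ.le]
            exact ENNReal.ofReal_le_ofReal (sq_div_le_of_abs_le_mul_min_sq (hK τ hτ) hR hτ hτr)
      _ = _ := by
          rw [setLIntegral_const, Real.volume_Ioc, sub_zero, ← ENNReal.ofReal_mul (by positivity)]

theorem lintegral_sq_intervalIntegral_mul_div_pow_three_le {f K : ℝ → ℝ} {C R : ℝ}
    (hf : Measurable f) (hKm : Measurable K) (hK : ∀ τ > 0, |K τ| ≤ C * min τ R ^ 2)
    (hR : 0 < R) :
    ∫⁻ r in Ioi 0, ENNReal.ofReal ((∫ τ in 0..r, f τ * K τ) ^ 2 / r ^ 3) ≤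
      ENNReal.ofReal (2 * C ^ 2 * R ^ 2) * ∫⁻ r in Ioi 0, ENNReal.ofReal (f r ^ 2 * r) := by
  set A := ∫⁻ r in Ioi 0, ENNReal.ofReal (f r ^ 2 * r)
  have hpt : ∀ r ∈ Ioi (0 : ℝ), ENNReal.ofReal ((∫ τ in 0..r, f τ * K τ) ^ 2 / r ^ 3) ≤
      ENNReal.ofReal (C ^ 2) * A * ENNReal.ofReal (min r R ^ 3 / r ^ 2) := fun r (hr : 0 < r) =>
    calc ENNReal.ofReal ((∫ τ in 0..r, f τ * K τ) ^ 2 / r ^ 3)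
        = ENNReal.ofReal ((∫ τ in 0..r, f τ * K τ) ^ 2) * ENNReal.ofReal (r ^ 3)⁻¹ := by
          rw [div_eq_mul_inv, ENNReal.ofReal_mul (sq_nonneg _)]
      _ ≤ A * ENNReal.ofReal (C ^ 2 * min r R ^ 3 * r) * ENNReal.ofReal (r ^ 3)⁻¹ := by
          gcongr; exact ofReal_sq_intervalIntegral_mul_le hf hKm hK hR hr
      _ = ENNReal.ofReal (C ^ 2) * A * ENNReal.ofReal (min r R ^ 3 / r ^ 2) := by
          rw [mul_assoc, ← ENNReal.ofReal_mul (by have := le_min hr.le hR.le; positivity),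
            show C ^ 2 * min r R ^ 3 * r * (r ^ 3)⁻¹ = C ^ 2 * (min r R ^ 3 / r ^ 2) by
              field_simp,
            ENNReal.ofReal_mul (sq_nonneg C), mul_left_comm, mul_assoc]
  calc _ ≤ ∫⁻ r in Ioi 0, ENNReal.ofReal (C ^ 2) * A * ENNReal.ofReal (min r R ^ 3 / r ^ 2) :=
        setLIntegral_mono' measurableSet_Ioi hpt
    _ = ENNReal.ofReal (C ^ 2) * A * ∫⁻ r in Ioi 0, ENNReal.ofReal (min r R ^ 3 / r ^ 2) :=
        lintegral_const_mul _ (by fun_prop)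
    _ ≤ ENNReal.ofReal (C ^ 2) * A * ENNReal.ofReal (2 * R ^ 2) := by
        gcongr; exact lintegral_Ioi_min_pow_three_div_sq_le hR
    _ = _ := by
        rw [mul_right_comm, ← ENNReal.ofReal_mul (sq_nonneg C)]
        ring_nf

theorem sq_mul_add_mul_le {a b k k' M M' : ℝ} (hk : |k| ≤ M) (hk' : |k'| ≤ M') :
    (a * k + b * k') ^ 2 ≤ 2 * M ^ 2 * a ^ 2 + 2 * M' ^ 2 * b ^ 2 := by
  have hk2 : k ^ 2 ≤ M ^ 2 := sq_le_sq.2 (hk.trans (le_abs_self M))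
  have hk'2 : k' ^ 2 ≤ M' ^ 2 := sq_le_sq.2 (hk'.trans (le_abs_self M'))
  nlinarith [sq_nonneg (a * k - b * k'), mul_le_mul_of_nonneg_left hk2 (sq_nonneg a),
    mul_le_mul_of_nonneg_left hk'2 (sq_nonneg b)]

noncomputable def corrector (u K : ℝ → ℝ) (r : ℝ) : ℝ := ∫ τ in Ioo 0 r, deriv u τ * (1 + K τ)

section corrector

variable {u K : ℝ → ℝ} {r : ℝ}

theorem corrector_zero : corrector u K 0 = 0 := by simp [corrector]

theorem sub_corrector_eq (hu : ContDiff ℝ 1 u) (hK : Continuous K) (hr : 0 ≤ r) :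
    u r - corrector u K r - u 0 = -∫ τ in 0..r, deriv u τ * K τ := by
  have hu' := hu.continuous_deriv le_rfl
  have hFTC : ∫ τ in 0..r, deriv u τ = u r - u 0 :=
    intervalIntegral.integral_deriv_eq_sub (fun x _ => hu.differentiable one_ne_zero x)
      (hu'.intervalIntegrable 0 r)
  have hsplit : corrector u K r = (∫ τ in 0..r, deriv u τ) + ∫ τ in 0..r, deriv u τ * K τ := by
    simp only [corrector, mul_one_add]
    rw [← integral_Ioc_eq_integral_Ioo, ← intervalIntegral.integral_of_le hr]
    exact intervalIntegral.integral_add (hu'.intervalIntegrable 0 r)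
      ((hu'.mul hK).intervalIntegrable 0 r)
  rw [hsplit, hFTC]
  ring

theorem hasDerivAt_sub_corrector (hu : ContDiff ℝ 1 u) (hK : Continuous K) (hr : 0 < r) :
    HasDerivAt (fun s => u s - corrector u K s - u 0) (-(deriv u r * K r)) r := by
  have hG := ((hu.continuous_deriv le_rfl).mul hK).integral_hasStrictDerivAt 0 r
  refine hG.hasDerivAt.neg.congr_of_eventuallyEq ?_
  filter_upwards [Ioi_mem_nhds hr] with s hs using sub_corrector_eq hu hK (le_of_lt hs)

theorem iteratedDeriv_two_sub_corrector (hu : ContDiff ℝ 2 u) (hK : ContDiff ℝ 1 K)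
    (hr : 0 < r) :
    iteratedDeriv 2 (fun s => u s - corrector u K s - u 0) r =
      -(iteratedDeriv 2 u r * K r + deriv u r * deriv K r) := by
  have hderiv : deriv (fun s => u s - corrector u K s - u 0) =ᶠ[𝓝 r]
      fun s => -(deriv u s * K s) := by
    filter_upwards [Ioi_mem_nhds hr] with s hs
    exact (hasDerivAt_sub_corrector (hu.of_le one_le_two) hK.continuous hs).deriv
  rw [iteratedDeriv_succ, iteratedDeriv_one, iteratedDeriv_succ, iteratedDeriv_one,
    hderiv.deriv_eq]
  exact ((hu.differentiable_deriv_two r).hasDerivAt.mul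
    (hK.differentiable one_ne_zero r).hasDerivAt).neg.deriv

theorem ofReal_weighted_sub_corrector_le (hu : ContDiff ℝ 2 u) (hK : ContDiff ℝ 1 K)
    {M₀ M₁ C R : ℝ} (hM₀ : ∀ x, |K x| ≤ M₀) (hM₁ : ∀ x, |deriv K x| ≤ M₁)
    (hKC : ∀ τ > 0, |K τ| ≤ C * min τ R ^ 2) (hR : 0 < R) (hr : 0 < r) :
    ENNReal.ofReal (iteratedDeriv 2 (fun s => u s - corrector u K s - u 0) r ^ 2 * r
        + deriv (fun s => u s - corrector u K s - u 0) r ^ 2 * r ^ (-2 : ℝ) * r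
        + (u r - corrector u K r - u 0) ^ 2 * r ^ (-4 : ℝ) * r) ≤
      ENNReal.ofReal (2 * M₀ ^ 2 + 2 * M₁ ^ 2 + C ^ 2 * R ^ 2) *
          ENNReal.ofReal ((iteratedDeriv 2 u r ^ 2 + deriv u r ^ 2 + u r ^ 2) * r) +
        ENNReal.ofReal ((∫ τ in 0..r, deriv u τ * K τ) ^ 2 / r ^ 3) := by
  have hu1 : ContDiff ℝ 1 u := hu.of_le one_le_two
  rw [iteratedDeriv_two_sub_corrector hu hK hr,
    (hasDerivAt_sub_corrector hu1 hK.continuous hr).deriv, sub_corrector_eq hu1 hK.continuous hr.le,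
    ← ENNReal.ofReal_mul (by positivity)]
  refine ENNReal.ofReal_le_ofReal ?_ |>.trans ENNReal.ofReal_add_le
  set a := iteratedDeriv 2 u r
  set b := deriv u r
  set G := ∫ τ in 0..r, deriv u τ * K τ
  have hv'' : (-(a * K r + b * deriv K r)) ^ 2 * r ≤
      (2 * M₀ ^ 2 * a ^ 2 + 2 * M₁ ^ 2 * b ^ 2) * r := by
    rw [neg_sq]
    exact mul_le_mul_of_nonneg_right (sq_mul_add_mul_le (hM₀ r) (hM₁ r)) hr.le
  have hv' : (-(b * K r)) ^ 2 * r ^ (-2 : ℝ) * r ≤ C ^ 2 * R ^ 2 * b ^ 2 * r := by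
    have hK2 : K r ^ 2 ≤ (C * R * r) ^ 2 :=
      sq_le_sq.2 ((abs_le_mul_mul_of_abs_le_mul_min_sq hr hR (hKC r hr)).trans (le_abs_self _))
    calc (-(b * K r)) ^ 2 * r ^ (-2 : ℝ) * r = b ^ 2 * K r ^ 2 * (r ^ 2)⁻¹ * r := by
          rw [Real.rpow_neg hr.le, neg_sq, mul_pow, Real.rpow_two]
      _ ≤ b ^ 2 * (C * R * r) ^ 2 * (r ^ 2)⁻¹ * r := by gcongr
      _ = C ^ 2 * R ^ 2 * b ^ 2 * r := by field_simp
  have hv : (-G) ^ 2 * r ^ (-4 : ℝ) * r = G ^ 2 / r ^ 3 := by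
    rw [neg_sq, Real.rpow_neg hr.le, show (4 : ℝ) = (4 : ℕ) by norm_num, Real.rpow_natCast]
    field_simp
  have hW : 0 ≤
      (2 * M₀ ^ 2 * (b ^ 2 + u r ^ 2) + (2 * M₁ ^ 2 + C ^ 2 * R ^ 2) * (a ^ 2 + u r ^ 2)) * r := by
    positivity
  linarith

theorem lintegral_weighted_sub_corrector_le (hu : ContDiff ℝ 2 u) (hK : ContDiff ℝ 1 K)
    {M₀ M₁ C R : ℝ} (hM₀ : ∀ x, |K x| ≤ M₀) (hM₁ : ∀ x, |deriv K x| ≤ M₁)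
    (hKC : ∀ τ > 0, |K τ| ≤ C * min τ R ^ 2) (hR : 0 < R) :
    ∫⁻ r in Ioi 0, ENNReal.ofReal
        (iteratedDeriv 2 (fun s => u s - corrector u K s - u 0) r ^ 2 * r
          + deriv (fun s => u s - corrector u K s - u 0) r ^ 2 * r ^ (-2 : ℝ) * r
          + (u r - corrector u K r - u 0) ^ 2 * r ^ (-4 : ℝ) * r) ≤
      ENNReal.ofReal (2 * M₀ ^ 2 + 2 * M₁ ^ 2 + 3 * C ^ 2 * R ^ 2) *
        ∫⁻ r in Ioi 0,
          ENNReal.ofReal ((iteratedDeriv 2 u r ^ 2 + deriv u r ^ 2 + u r ^ 2) * r) := by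
  set N := ∫⁻ r in Ioi 0, ENNReal.ofReal ((iteratedDeriv 2 u r ^ 2 + deriv u r ^ 2 + u r ^ 2) * r)
  have hu'' := hu.continuous_iteratedDeriv 2 le_rfl
  have hu' := hu.continuous_deriv one_le_two
  have hu₀ := hu.continuous
  have hAN : ∫⁻ r in Ioi 0, ENNReal.ofReal (deriv u r ^ 2 * r) ≤ N :=
    setLIntegral_mono' measurableSet_Ioi fun r (hr : 0 < r) => ENNReal.ofReal_le_ofReal <|
      mul_le_mul_of_nonneg_right
        (by linarith [sq_nonneg (iteratedDeriv 2 u r), sq_nonneg (u r)]) hr.le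
  calc _ ≤ ∫⁻ r in Ioi 0, (ENNReal.ofReal (2 * M₀ ^ 2 + 2 * M₁ ^ 2 + C ^ 2 * R ^ 2) *
          ENNReal.ofReal ((iteratedDeriv 2 u r ^ 2 + deriv u r ^ 2 + u r ^ 2) * r) +
        ENNReal.ofReal ((∫ τ in 0..r, deriv u τ * K τ) ^ 2 / r ^ 3)) :=
        setLIntegral_mono' measurableSet_Ioi fun r hr =>
          ofReal_weighted_sub_corrector_le hu hK hM₀ hM₁ hKC hR hr
    _ = ENNReal.ofReal (2 * M₀ ^ 2 + 2 * M₁ ^ 2 + C ^ 2 * R ^ 2) * N +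
        ∫⁻ r in Ioi 0, ENNReal.ofReal ((∫ τ in 0..r, deriv u τ * K τ) ^ 2 / r ^ 3) := by
        rw [lintegral_add_left (by fun_prop), lintegral_const_mul _ (by fun_prop)]
    _ ≤ ENNReal.ofReal (2 * M₀ ^ 2 + 2 * M₁ ^ 2 + C ^ 2 * R ^ 2) * N +
        ENNReal.ofReal (2 * C ^ 2 * R ^ 2) * N := by
        gcongr
        exact (lintegral_sq_intervalIntegral_mul_div_pow_three_le hu'.measurable
          hK.continuous.measurable hKC hR).trans (mul_le_mul_right hAN _)
    _ = _ := by
        rw [← add_mul, ← ENNReal.ofReal_add (by positivity) (by positivity)]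
        ring_nf

end corrector

/-- Lemma 3.7 (one-dimensional version): the corrector `χ` with `χ' = u'(1+K)` makes
`u - χ - u(0)` lie in the weighted space `H²₀((0,∞))`, controlled by the unweighted
`H²` norm of `u` with measure `r dr`. -/
theorem corrector_chi (K : ℝ → ℝ) (c₀ : ℝ)
    (hK : ContDiff ℝ (⊤ : ℕ∞) K) (hKsupp : HasCompactSupport K)
    (hKlim : Tendsto (fun r => K r / r ^ 2) (nhdsWithin 0 (Ioi 0)) (nhds c₀)) :
    ∃ c > (0:ℝ), ∀ u : ℝ → ℝ, ∀ u₀ : ℝ, ContDiff ℝ (⊤ : ℕ∞) u → u 0 = u₀ →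
      ∀ χ : ℝ → ℝ, (∀ r, χ r = ∫ τ in Ioo 0 r, deriv u τ * (1 + K τ)) →
      (∫⁻ r in Ioi (0:ℝ), ENNReal.ofReal (((iteratedDeriv 2 u r) ^ 2
          + (deriv u r) ^ 2 + (u r) ^ 2) * r)) ≠ ⊤ →
      (χ 0 = 0 ∧
       u 0 - χ 0 - u₀ = 0 ∧
       (∀ r > (0:ℝ), deriv (fun s => u s - χ s - u₀) r = -(deriv u r * K r)) ∧
       (∫⁻ r in Ioi (0:ℝ), ENNReal.ofReal
            ((iteratedDeriv 2 (fun s => u s - χ s - u₀) r) ^ 2 * r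
              + (deriv (fun s => u s - χ s - u₀) r) ^ 2 * r ^ (-2 : ℝ) * r
              + (u r - χ r - u₀) ^ 2 * r ^ (-4 : ℝ) * r)
          ≤ ENNReal.ofReal c * ∫⁻ r in Ioi (0:ℝ), ENNReal.ofReal
              (((iteratedDeriv 2 u r) ^ 2 + (deriv u r) ^ 2 + (u r) ^ 2) * r))) := by
  obtain ⟨C, R, hR, hKC⟩ := exists_abs_le_mul_min_sq hK.continuous hKsupp hKlim
  obtain ⟨M₀, hM₀⟩ := hKsupp.exists_bound_of_continuous hK.continuous
  obtain ⟨M₁, hM₁⟩ := hKsupp.deriv.exists_bound_of_continuous (hK.continuous_deriv (by norm_cast))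
  simp only [Real.norm_eq_abs] at hM₀ hM₁
  refine ⟨2 * M₀ ^ 2 + 2 * M₁ ^ 2 + 3 * C ^ 2 * R ^ 2 + 1, by positivity, ?_⟩
  rintro u _ hu rfl χ hχ -
  obtain rfl : χ = corrector u K := funext hχ
  have hu2 : ContDiff ℝ 2 u := hu.of_le (by norm_cast)
  refine ⟨corrector_zero, by rw [corrector_zero, sub_zero, sub_self],
    fun r hr => (hasDerivAt_sub_corrector (hu2.of_le one_le_two) hK.continuous hr).deriv, ?_⟩
  refine (lintegral_weighted_sub_corrector_le hu2 (hK.of_le (by norm_cast)) hM₀ hM₁ hKC hR).trans ?_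
  gcongr ENNReal.ofReal ?_ * _
  linarith
end
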